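/- In the semigroup S on {γ_k : k ∈ ℕ⁺} ∪ {δ_k : k ∈ ℕ⁺} with multiplication γ_{k₁}γ_{k₂} = γ_{k₁}δ_{k₂} = γ_{k₁k₂} and δ_{k₁}γ_{k₂} = δ_{k₁}δ_{k₂} = δ_{k₁k₂}, Green's relation 𝓛 satisfies: γ_{k₁}𝓛γ_{k₂} iff k₁ = k₂; δ_{k₁}𝓛δ_{k₂} iff k₁ = k₂; and γ_{k₁}𝓛δ_{k₂} iff k₁ = k₂. -/

import Mathlib

/-- The abstract semigroup on two copies of the positive integers. -/
inductive GD
  | g : ℕ+ → GD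
  | d : ℕ+ → GD
deriving DecidableEq

/-- Multiplication: `γ_{k₁}γ_{k₂} = γ_{k₁}δ_{k₂} = γ_{k₁k₂}`, `δ_{k₁}γ_{k₂} = δ_{k₁}δ_{k₂} = δ_{k₁k₂}`. -/
def GD.mul : GD → GD → GD
  | GD.g k, GD.g m => GD.g (k * m)
  | GD.g k, GD.d m => GD.g (k * m)
  | GD.d k, GD.g m => GD.d (k * m)
  | GD.d k, GD.d m => GD.d (k * m)

/-- `aS¹ = {a} ∪ aS`. -/
def rIdeal (a : GD) : Set GD := insert a {x : GD | ∃ s : GD, x = GD.mul a s}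

/-- `S¹a = {a} ∪ Sa`. -/
def lIdeal (a : GD) : Set GD := insert a {x : GD | ∃ s : GD, x = GD.mul s a}

/-- `S¹aS¹`. -/
def jIdeal (a : GD) : Set GD :=
  {x : GD | x = a ∨ (∃ s : GD, x = GD.mul a s) ∨ (∃ s : GD, x = GD.mul s a) ∨ (∃ s t : GD, x = GD.mul (GD.mul s a) t)}

/-- Green's relation `𝓡`. -/
def rRel (a b : GD) : Prop := rIdeal a = rIdeal b

/-- Green's relation `𝓛`. -/
def lRel (a b : GD) : Prop := lIdeal a = lIdeal b

/-- Green's relation `𝓓 = 𝓛 ∘ 𝓡`. -/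
def dRel (a b : GD) : Prop := ∃ c, lRel a c ∧ rRel c b

/-- Green's relation `𝓙`. -/
def jRel (a b : GD) : Prop := jIdeal a = jIdeal b

/-! The left ideal `S¹a` is exactly the set of elements whose index is a multiple of the
index of `a`, whatever the letter (`γ` or `δ`) of `a`: the letter of a product is that of
the left factor and its index is the product of the indices. Hence `a 𝓛 b` iff `a` and `b`
have the same index. -/

def GD.idx : GD → ℕ+
  | GD.g k => k
  | GD.d k => k

namespace GD

lemma idx_mul (s a : GD) : (GD.mul s a).idx = s.idx * a.idx := by
  cases s <;> cases a <;> rfl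

lemma g_mul (m : ℕ+) (a : GD) : GD.mul (GD.g m) a = GD.g (m * a.idx) := by
  cases a <;> rfl

lemma d_mul (m : ℕ+) (a : GD) : GD.mul (GD.d m) a = GD.d (m * a.idx) := by
  cases a <;> rfl

end GD

lemma lIdeal_eq_setOf_idx_dvd (a : GD) : lIdeal a = {x | a.idx ∣ x.idx} := by
  ext x
  constructor
  · rintro (rfl | ⟨s, rfl⟩)
    · exact dvd_rfl
    · show a.idx ∣ (GD.mul s a).idx
      rw [GD.idx_mul]
      exact dvd_mul_left _ _
  · rintro ⟨m, hm⟩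
    refine Or.inr ?_
    cases x with
    | g k => exact ⟨GD.g m, by rw [GD.g_mul, ← mul_comm, ← hm]; rfl⟩
    | d k => exact ⟨GD.d m, by rw [GD.d_mul, ← mul_comm, ← hm]; rfl⟩

lemma lRel_iff_idx_eq (a b : GD) : lRel a b ↔ a.idx = b.idx := by
  refine ⟨fun h => PNat.dvd_antisymm ?_ ?_, fun h => ?_⟩
  · have hb : b ∈ lIdeal a := h ▸ Set.mem_insert b _
    rwa [lIdeal_eq_setOf_idx_dvd] at hb
  · have ha : a ∈ lIdeal b := h ▸ Set.mem_insert a _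
    rwa [lIdeal_eq_setOf_idx_dvd] at ha
  · rw [lRel, lIdeal_eq_setOf_idx_dvd, lIdeal_eq_setOf_idx_dvd, h]

/-- Green's relation `𝓛` on `S`. -/
theorem stmt16 :
    (∀ k₁ k₂ : ℕ+, lRel (GD.g k₁) (GD.g k₂) ↔ k₁ = k₂) ∧
    (∀ k₁ k₂ : ℕ+, lRel (GD.d k₁) (GD.d k₂) ↔ k₁ = k₂) ∧
    (∀ k₁ k₂ : ℕ+, lRel (GD.g k₁) (GD.d k₂) ↔ k₁ = k₂) :=
  ⟨fun _ _ => lRel_iff_idx_eq _ _, fun _ _ => lRel_iff_idx_eq _ _,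
    fun _ _ => lRel_iff_idx_eq _ _⟩
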